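/- arXiv:2507.11961 — 6 statements merged into one kernel-verified Lean document; each statement's English description precedes it below -/
import Mathlib

section
/- For every normal fuzzy logic program P, the operator A_P is ≤ₚ-monotone: if (L₁,U₁) ≤ₚ (L₂,U₂) then A_P(L₁,U₁) ≤ₚ A_P(L₂,U₂). -/
open scoped Classical

/-- Normal fuzzy formulas over truth values `V` and atoms `A`: constants, atoms,
negated atoms, and applications of `n`-ary connectives given by their truth functions. -/
inductive FForm (V : Type*) (A : Type*) : Type _ where
  | const : V → FForm V A
  | atom : A → FForm V A
  | natom : A → FForm V A
  | app : (n : ℕ) → ((Fin n → V) → V) → (Fin n → FForm V A) → FForm V A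

namespace FForm

variable {V : Type*} {A : Type*} [CompleteLattice V]

/-- All connective truth functions occurring in the formula are monotone. -/
def Good : FForm V A → Prop
  | const _ => True
  | atom _ => True
  | natom _ => True
  | app _ f args => Monotone f ∧ ∀ i, Good (args i)

/-- Evaluation `⟦φ⟧_{(L,U)}` of a formula under a pair of interpretations:
atoms are evaluated by `L`, negated atoms by `∼ U(·)`. -/
def evalPair (ng : V → V) (L U : A → V) : FForm V A → V
  | const c => c
  | atom p => L p
  | natom p => ng (U p)
  | app _ f args => f (fun i => evalPair ng L U (args i))

/-- Evaluation `⟦φ⟧_I` under a single interpretation. -/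
def evalI (ng : V → V) (I : A → V) (φ : FForm V A) : V := evalPair ng I I φ

end FForm

/-- A rule `p ←ᵢ^θ B` of a normal fuzzy logic program, carrying its
conjunctor truth function. -/
structure Rule (V : Type*) (A : Type*) where
  head : A
  weight : V
  conj : V → V → V
  body : FForm V A

variable {V : Type*} {A : Type*} [CompleteLattice V]

/-- All rule bodies are built from monotone connectives and all conjunctors are
monotone in both arguments. -/
def GoodProgram (P : Set (Rule V A)) : Prop :=
  ∀ r ∈ P, FForm.Good r.body ∧ (∀ x : V, Monotone (r.conj x)) ∧
    (∀ y : V, Monotone (fun x => r.conj x y))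

/-- The immediate consequence operator `T_P`. -/
noncomputable def Tp (ng : V → V) (P : Set (Rule V A)) (I : A → V) : A → V :=
  fun p => sSup {v | ∃ r ∈ P, r.head = p ∧ v = r.conj r.weight (FForm.evalI ng I r.body)}

/-- The approximator `A_P` on pairs of interpretations. -/
noncomputable def Ap (ng : V → V) (P : Set (Rule V A)) :
    (A → V) × (A → V) → (A → V) × (A → V) :=
  fun LU =>
    (fun p => sSup {v | ∃ r ∈ P, r.head = p ∧
        v = r.conj r.weight (FForm.evalPair ng LU.1 LU.2 r.body)},
     fun p => sSup {v | ∃ r ∈ P, r.head = p ∧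
        v = r.conj r.weight (FForm.evalPair ng LU.2 LU.1 r.body)})

/-- The precision order `≤ₚ` on pairs of interpretations. -/
def prec (x y : (A → V) × (A → V)) : Prop := x.1 ≤ y.1 ∧ y.2 ≤ x.2

/-- The least fixpoint of a (monotone) operator on a complete lattice,
via Knaster–Tarski. -/
noncomputable def lfp {α : Type*} [CompleteLattice α] (F : α → α) : α :=
  sInf {x | F x ≤ x}

/-- The stable approximator `B*` associated to an operator `B` on pairs. -/
noncomputable def stableAp (F : (A → V) × (A → V) → (A → V) × (A → V)) :
    (A → V) × (A → V) → (A → V) × (A → V) :=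
  fun LU => (lfp (fun L' => (F (L', LU.2)).1), lfp (fun U' => (F (LU.1, U')).2))



lemma evalPair_mono {V : Type*} {A : Type*} [CompleteLattice V]
    (ng : V → V) (hng : Antitone ng) {L₁ U₁ L₂ U₂ : A → V}
    (hL : L₁ ≤ L₂) (hU : U₂ ≤ U₁) :
    ∀ φ : FForm V A, FForm.Good φ →
      FForm.evalPair ng L₁ U₁ φ ≤ FForm.evalPair ng L₂ U₂ φ := by
  intro φ
  induction φ with
  | const c => intro _; simp [FForm.evalPair]
  | atom p => intro _; exact hL p
  | natom p => intro _; exact hng (hU p)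
  | app n f args ih =>
    intro hg
    exact hg.1 (fun i => ih i (hg.2 i))

/-- the approximator `A_P` is monotone with respect to the
precision order `≤ₚ`. -/
theorem Ap_prec_monotone
    {V : Type*} {A : Type*} [CompleteLattice V]
    (ng : V → V) (hng_anti : Antitone ng) (hng_inv : Function.Involutive ng)
    (P : Set (Rule V A)) (hPfin : P.Finite) (hP : GoodProgram P)
    (L₁ U₁ L₂ U₂ : A → V) (h : prec (L₁, U₁) (L₂, U₂)) :
    prec (Ap ng P (L₁, U₁)) (Ap ng P (L₂, U₂)) := by
  obtain ⟨hL, hU⟩ := h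
  constructor
  · intro p
    apply sSup_le
    rintro v ⟨r, hr, hh, rfl⟩
    obtain ⟨hgood, hconj, -⟩ := hP r hr
    refine le_sSup_of_le ⟨r, hr, hh, rfl⟩ ?_
    exact hconj r.weight (evalPair_mono ng hng_anti hL hU r.body hgood)
  · intro p
    apply sSup_le
    rintro v ⟨r, hr, hh, rfl⟩
    obtain ⟨hgood, hconj, -⟩ := hP r hr
    refine le_sSup_of_le ⟨r, hr, hh, rfl⟩ ?_
    exact hconj r.weight (evalPair_mono ng hng_anti hU hL r.body hgood)
end

section
/- For every normal fuzzy logic program P in which each atom has exactly one rule and every approximate interpretation X, ζ(T̃_P(X)) = A_P(ζ(X)). -/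
open scoped Classical

variable {V : Type*} {A : Type*} [CompleteLattice V]

namespace FForm

variable {V : Type*} {A : Type*} [CompleteLattice V]

/-- Evaluation `⟦φ⟧_X` of a formula under an approximate interpretation
`X : A → V × V`: connective truth functions are extended componentwise and
negation on pairs is `∼(ℓ,u) = (∼u, ∼ℓ)`. -/
def evalApprox (ng : V → V) (X : A → V × V) : FForm V A → V × V
  | const c => (c, c)
  | atom p => X p
  | natom p => (ng (X p).2, ng (X p).1)
  | app _ f args =>
      (f (fun i => (evalApprox ng X (args i)).1), f (fun i => (evalApprox ng X (args i)).2))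

end FForm

/-- `ζ(X)`: the pair of interpretations associated to an approximate
interpretation. -/
def zeta {V : Type*} {A : Type*} (X : A → V × V) : (A → V) × (A → V) :=
  (fun p => (X p).1, fun p => (X p).2)

variable {V : Type*} {A : Type*} [CompleteLattice V]

/-- The program with exactly one rule `p ←_p^⊤ B p` per atom `p`, with weight
`⊤` (the top truth value `1`) and conjunctor `cj p`. -/
def uniqProg (B : A → FForm V A) (cj : A → V → V → V) : Set (Rule V A) :=
  Set.range (fun p => Rule.mk p ⊤ (cj p) (B p))

/-- The Loyer–Straccia operator `T̃_P` on approximate interpretations,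
`T̃_P(X)(p) = ⟦B_p⟧_X`. -/
def TLS (ng : V → V) (B : A → FForm V A) (X : A → V × V) : A → V × V :=
  fun p => FForm.evalApprox ng X (B p)

/-- for a normal fuzzy logic program with exactly one rule per atom
(weight `1 = ⊤`, conjunctor satisfying `1 ∧ᵢ x = x`), we have
`ζ(T̃_P(X)) = A_P(ζ(X))` for every approximate interpretation `X`. -/
theorem zeta_TLS_eq_Ap_zeta
    {V : Type*} {A : Type*} [CompleteLattice V] [Finite A]
    (ng : V → V) (hng_anti : Antitone ng) (hng_inv : Function.Involutive ng)
    (B : A → FForm V A) (hB : ∀ p, FForm.Good (B p))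
    (cj : A → V → V → V)
    (hcj_mono₁ : ∀ p x, Monotone (cj p x))
    (hcj_mono₂ : ∀ p y, Monotone (fun x => cj p x y))
    (hcj_top : ∀ p x, cj p ⊤ x = x)
    (X : A → V × V) :
    zeta (TLS ng B X) = Ap ng (uniqProg B cj) (zeta X) := by
  have key : ∀ φ : FForm V A,
      (FForm.evalApprox ng X φ).1 = FForm.evalPair ng (zeta X).1 (zeta X).2 φ ∧
      (FForm.evalApprox ng X φ).2 = FForm.evalPair ng (zeta X).2 (zeta X).1 φ := by
    intro φ
    induction φ with
    | const c => exact ⟨rfl, rfl⟩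
    | atom p => exact ⟨rfl, rfl⟩
    | natom p => exact ⟨rfl, rfl⟩
    | app n f args ih =>
      constructor <;> simp only [FForm.evalApprox, FForm.evalPair] <;>
        congr 1 <;> funext i <;> [exact (ih i).1; exact (ih i).2]
  have hset : ∀ (p : A) (L U : A → V),
      {v | ∃ r ∈ uniqProg B cj, r.head = p ∧
        v = r.conj r.weight (FForm.evalPair ng L U r.body)}
      = {FForm.evalPair ng L U (B p)} := by
    intro p L U
    ext v
    constructor
    · rintro ⟨r, ⟨q, rfl⟩, hq, rfl⟩
      simp only [Set.mem_singleton_iff]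
      simp only at hq
      subst hq
      rw [hcj_top]
    · rintro rfl
      exact ⟨⟨p, ⊤, cj p, B p⟩, ⟨p, rfl⟩, rfl, (hcj_top p _).symm⟩
  apply Prod.ext <;> funext p <;>
    simp only [zeta, TLS, Ap, hset, csSup_singleton]
  · exact (key (B p)).1
  · exact (key (B p)).2
end

section
/- For every normal fuzzy logic program P and every interpretation I, the operator J ↦ first component of A_P(J,I) equals the immediate consequence operator T_{P_I} of the reduct P_I. -/
open scoped Classical

variable {V : Type*} {A : Type*} [CompleteLattice V]

namespace FForm

variable {V : Type*} {A : Type*} [CompleteLattice V]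

/-- The positive formula `B_I`: every negated atom `∼q` is replaced by the
constant `∼I(q)`. -/
def reduct (ng : V → V) (I : A → V) : FForm V A → FForm V A
  | const c => const c
  | atom p => atom p
  | natom p => const (ng (I p))
  | app n f args => app n f (fun i => reduct ng I (args i))

end FForm

/-- The reduct `P_I` of a program: each rule body `B` is replaced by `B_I`. -/
def reductP {V : Type*} {A : Type*} [CompleteLattice V]
    (ng : V → V) (P : Set (Rule V A)) (I : A → V) : Set (Rule V A) :=
  (fun r => Rule.mk r.head r.weight r.conj (FForm.reduct ng I r.body)) '' P


theorem evalPair_eq_evalI_reduct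
    {V : Type*} {A : Type*} [CompleteLattice V]
    (ng : V → V) (J I : A → V) (B : FForm V A) :
    FForm.evalPair ng J I B = FForm.evalI ng J (FForm.reduct ng I B) := by
  induction B with
  | const c => rfl
  | atom p => rfl
  | natom p => rfl
  | app n f args ih =>
    simp only [FForm.evalPair, FForm.reduct, FForm.evalI] at *
    congr 1; funext i; exact ih i

/-- the operator `J ↦ (A_P(J,I))₁` equals the immediate consequence
operator `T_{P_I}` of the reduct `P_I`. -/
theorem Ap_fst_eq_Tp_reduct
    {V : Type*} {A : Type*} [CompleteLattice V]
    (ng : V → V) (hng_anti : Antitone ng) (hng_inv : Function.Involutive ng)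
    (P : Set (Rule V A)) (hPfin : P.Finite) (hP : GoodProgram P)
    (I : A → V) :
    (fun J => (Ap ng P (J, I)).1) = Tp ng (reductP ng P I) := by
  funext J p
  simp only [Ap, Tp]
  congr 1
  ext v
  constructor
  · rintro ⟨r, hr, hh, hv⟩
    exact ⟨⟨r.head, r.weight, r.conj, FForm.reduct ng I r.body⟩, ⟨r, hr, rfl⟩, hh,
      by rw [hv, evalPair_eq_evalI_reduct]⟩
  · rintro ⟨r', ⟨r, hr, rfl⟩, hh, hv⟩
    exact ⟨r, hr, hh, by rw [hv, ← evalPair_eq_evalI_reduct]⟩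
end

section
/- For every normal fuzzy logic program P and every interpretation I, the exact pair (I,I) is a fixpoint of the stable approximator A_P* if and only if I is the least fixpoint of T_{P_I}, i.e., if and only if I is a Cornejo–Lobo–Medina stable model of P. -/
open scoped Classical

variable {V : Type*} {A : Type*} [CompleteLattice V]

/-- `(I,I)` is a fixpoint of the stable approximator `A_P*` iff
`I` is the least fixpoint of `T_{P_I}`, i.e. iff `I` is a Cornejo–Lobo–Medina
stable model of `P`. -/
theorem stable_fixpoint_iff_stable_model
    {V : Type*} {A : Type*} [CompleteLattice V]
    (ng : V → V) (hng_anti : Antitone ng) (hng_inv : Function.Involutive ng)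
    (P : Set (Rule V A)) (hPfin : P.Finite) (hP : GoodProgram P)
    (I : A → V) :
    stableAp (Ap ng P) (I, I) = (I, I) ↔ lfp (Tp ng (reductP ng P I)) = I := by
  have heval : ∀ (J : A → V) (B : FForm V A),
      FForm.evalI ng J (FForm.reduct ng I B) = FForm.evalPair ng J I B := by
    intro J B
    induction B with
    | const c => rfl
    | atom p => rfl
    | natom p => rfl
    | app n f args ih =>
        simp only [FForm.reduct, FForm.evalI, FForm.evalPair] at *
        exact congrArg f (funext fun i => ih i)
  have hTp : ∀ J : A → V, Tp ng (reductP ng P I) J = (Ap ng P (J, I)).1 := by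
    intro J
    funext p
    simp only [Tp, Ap]
    congr 1
    ext v
    constructor
    · rintro ⟨r, ⟨s, hs, rfl⟩, hh, hv⟩
      exact ⟨s, hs, hh, by simpa [heval] using hv⟩
    · rintro ⟨s, hs, hh, hv⟩
      exact ⟨_, ⟨s, hs, rfl⟩, hh, by simpa [heval] using hv⟩
  have hsnd : ∀ J : A → V, (Ap ng P (I, J)).2 = (Ap ng P (J, I)).1 := by
    intro J; rfl
  have hstable : stableAp (Ap ng P) (I, I) =
      (lfp (Tp ng (reductP ng P I)), lfp (Tp ng (reductP ng P I))) := by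
    have h1 : (fun L' : A → V => (Ap ng P (L', I)).1) = Tp ng (reductP ng P I) :=
      funext fun J => (hTp J).symm
    have h2 : (fun U' : A → V => (Ap ng P (I, U')).2) = Tp ng (reductP ng P I) :=
      funext fun J => (hsnd J).trans (hTp J).symm
    simp only [stableAp, h1, h2]
  rw [hstable, Prod.mk.injEq, and_self]
end

section
/- If a normal fuzzy logic program P is stratifiable over a partition (Π₁,Π₂) of Π, then the approximator A_P is stratifiable over (Π₁,Π₂): for all pairs of interpretations (L¹,U¹) and (L²,U²), if (L¹,U¹)|Π₁ = (L²,U²)|Π₁ then A_P(L¹,U¹)|Π₁ = A_P(L²,U²)|Π₁. -/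
open scoped Classical

variable {V : Type*} {A : Type*} [CompleteLattice V]

namespace FForm

/-- The atom `q` occurs (positively or under `∼`) in the formula. -/
def occurs {V : Type*} {A : Type*} (q : A) : FForm V A → Prop
  | const _ => False
  | atom p => p = q
  | natom p => p = q
  | app _ _ args => ∃ i, occurs q (args i)

end FForm

/-- `P` is stratifiable over the partition `(Π₁, Π₂)` with `Π₁ = S` and
`Π₂ = Sᶜ`: whenever `q ⪯_P p` (i.e. `q` occurs in the body of a rule with head
`p`) and `p ∈ Π₁`, then `q ∈ Π₁`. -/
def Stratifiable {V : Type*} {A : Type*} (P : Set (Rule V A)) (S : Set A) : Prop :=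
  ∀ r ∈ P, ∀ q, FForm.occurs q r.body → r.head ∈ S → q ∈ S

lemma evalPair_congr {V : Type*} {A : Type*} (ng : V → V) (L₁ U₁ L₂ U₂ : A → V)
    (φ : FForm V A)
    (h : ∀ q, FForm.occurs q φ → L₁ q = L₂ q ∧ U₁ q = U₂ q) :
    FForm.evalPair ng L₁ U₁ φ = FForm.evalPair ng L₂ U₂ φ := by
  induction φ with
  | const c => rfl
  | atom p => exact (h p rfl).1
  | natom p => simp [FForm.evalPair, (h p rfl).2]
  | app n f args ih =>
      simp only [FForm.evalPair]
      congr 1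
      funext i
      exact ih i (fun q hq => h q ⟨i, hq⟩)

/-- if `P` is stratifiable over the partition `(Π₁, Π₂)` (with
`Π₁ = S`, `Π₂ = Sᶜ`), then the approximator `A_P` is stratifiable over
`(Π₁, Π₂)`: pairs agreeing on `Π₁` are mapped to pairs agreeing on `Π₁`. -/
theorem Ap_stratifiable
    {V : Type*} {A : Type*} [CompleteLattice V]
    (ng : V → V) (hng_anti : Antitone ng) (hng_inv : Function.Involutive ng)
    (P : Set (Rule V A)) (hPfin : P.Finite) (hP : GoodProgram P)
    (S : Set A) (hstrat : Stratifiable P S)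
    (L₁ U₁ L₂ U₂ : A → V)
    (hagree : ∀ p ∈ S, L₁ p = L₂ p ∧ U₁ p = U₂ p) :
    ∀ p ∈ S, (Ap ng P (L₁, U₁)).1 p = (Ap ng P (L₂, U₂)).1 p ∧
      (Ap ng P (L₁, U₁)).2 p = (Ap ng P (L₂, U₂)).2 p := by
  intro p hp
  have key : ∀ r ∈ P, r.head = p → ∀ q, FForm.occurs q r.body →
      L₁ q = L₂ q ∧ U₁ q = U₂ q := by
    intro r hr hhead q hq
    exact hagree q (hstrat r hr q hq (hhead ▸ hp))
  constructor <;>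
  · simp only [Ap]
    congr 1
    ext v
    constructor <;> rintro ⟨r, hr, hhead, rfl⟩ <;>
      refine ⟨r, hr, hhead, ?_⟩ <;>
      · congr 1
        apply evalPair_congr
        intro q hq
        have := key r hr hhead q hq
        tauto
end

section
/- Let V = [0,1] ⊆ ℝ with ∼x = 1 − x, Π = {p}, and let P consist of the two rules p ← p and p ← ∼p (both with weight 1 and Gödel conjunctor). Then A_P(⊥,⊤) = (⊥,⊤), so (⊥,⊤) is the ≤ₚ-least fixpoint of A_P, whereas the ultimate approximator satisfies T_P^u(⊥,⊤) = (L½, ⊤) with L½(p) = 1/2, and (L½, ⊤) is the ≤ₚ-least fixpoint of T_P^u; here ⊥ and ⊤ denote the interpretations constantly 0 and constantly 1. -/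
open scoped Classical

variable {V : Type*} {A : Type*} [CompleteLattice V]

/-- The ultimate approximator of `T_P`:
`T_P^u(L,U) = (⨅{ T_P(K) : L ≤ K ≤ U }, ⨆{ T_P(K) : L ≤ K ≤ U })`. -/
noncomputable def Ult {V : Type*} {A : Type*} [CompleteLattice V]
    (ng : V → V) (P : Set (Rule V A)) :
    (A → V) × (A → V) → (A → V) × (A → V) :=
  fun LU =>
    (sInf {J | ∃ K, LU.1 ≤ K ∧ K ≤ LU.2 ∧ J = Tp ng P K},
     sSup {J | ∃ K, LU.1 ≤ K ∧ K ≤ LU.2 ∧ J = Tp ng P K})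

instance : Fact ((0 : ℝ) ≤ 1) := ⟨zero_le_one⟩

/-- The program `{ p ← p, p ← ∼p }` over the single atom `p` (atom type `Unit`),
both rules with weight `1 = ⊤` and Gödel conjunctor `min`. -/
noncomputable def exProg19 : Set (Rule unitInterval Unit) :=
  {Rule.mk () ⊤ (fun x y => x ⊓ y) (FForm.atom ()),
   Rule.mk () ⊤ (fun x y => x ⊓ y) (FForm.natom ())}

/-- The interpretation `L½` with `L½(p) = 1/2`. -/
noncomputable def halfI : Unit → unitInterval := fun _ => ⟨1 / 2, by norm_num⟩


section Aux19

lemma ex_set19 (L U : Unit → unitInterval) (p : Unit) :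
    {v | ∃ r ∈ exProg19, r.head = p ∧
      v = r.conj r.weight (FForm.evalPair unitInterval.symm L U r.body)}
    = {L (), unitInterval.symm (U ())} := by
  ext v
  simp [exProg19, FForm.evalPair]

lemma Tp_ex19 (K : Unit → unitInterval) :
    Tp unitInterval.symm exProg19 K = fun _ => K () ⊔ unitInterval.symm (K ()) := by
  funext p
  show sSup _ = _
  rw [show (FForm.evalI (V := unitInterval) (A := Unit) unitInterval.symm K)
      = FForm.evalPair unitInterval.symm K K from rfl]
  rw [ex_set19, sSup_pair]

lemma Ap_ex19 (L U : Unit → unitInterval) :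
    Ap unitInterval.symm exProg19 (L, U)
      = (fun _ => L () ⊔ unitInterval.symm (U ()),
         fun _ => U () ⊔ unitInterval.symm (L ())) := by
  unfold Ap
  refine Prod.ext ?_ ?_ <;> funext p
  · show sSup {v | ∃ r ∈ exProg19, r.head = p ∧
        v = r.conj r.weight (FForm.evalPair unitInterval.symm L U r.body)} = _
    rw [ex_set19, sSup_pair]
  · show sSup {v | ∃ r ∈ exProg19, r.head = p ∧
        v = r.conj r.weight (FForm.evalPair unitInterval.symm U L r.body)} = _
    rw [ex_set19, sSup_pair]

lemma symm_half : unitInterval.symm (halfI ()) = halfI () := by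
  ext; simp [unitInterval.symm, halfI]; norm_num

lemma half_le_sup (x : unitInterval) : halfI () ≤ x ⊔ unitInterval.symm x := by
  rcases le_total (x : ℝ) (1 / 2) with h | h
  · refine le_sup_of_le_right ?_
    rw [← Subtype.coe_le_coe]
    simp only [unitInterval.coe_symm_eq, halfI]
    linarith
  · exact le_sup_of_le_left (by rw [← Subtype.coe_le_coe]; exact h)

lemma Tp_halfI : Tp unitInterval.symm exProg19 halfI = halfI := by
  rw [Tp_ex19]; funext p; rw [symm_half, sup_idem]

lemma Tp_top : Tp unitInterval.symm exProg19 ⊤ = ⊤ := by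
  rw [Tp_ex19]; funext p; simp

lemma half_le_inf (L U : Unit → unitInterval) :
    halfI ≤ sInf {J | ∃ K, L ≤ K ∧ K ≤ U ∧ J = Tp unitInterval.symm exProg19 K} := by
  refine le_sInf ?_
  rintro J ⟨K, -, -, rfl⟩
  rw [Tp_ex19]
  intro p
  exact half_le_sup (K ())

end Aux19

/-- for `P = { p ← p, p ← ∼p }` over `V = [0,1]` with
`∼x = 1 - x`, `A_P(⊥,⊤) = (⊥,⊤)` and `(⊥,⊤)` is the `≤ₚ`-least fixpoint of
`A_P`, whereas the ultimate approximator satisfies `T_P^u(⊥,⊤) = (L½,⊤)` and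
`(L½,⊤)` is the `≤ₚ`-least fixpoint of `T_P^u`. -/
theorem example_ultimate_more_precise :
    Ap unitInterval.symm exProg19 (⊥, ⊤) = (⊥, ⊤) ∧
    (∀ W, Ap unitInterval.symm exProg19 W = W → prec ((⊥, ⊤) : (Unit → unitInterval) × (Unit → unitInterval)) W) ∧
    Ult unitInterval.symm exProg19 (⊥, ⊤) = (halfI, ⊤) ∧
    (Ult unitInterval.symm exProg19 (halfI, ⊤) = (halfI, ⊤) ∧
      ∀ W, Ult unitInterval.symm exProg19 W = W → prec (halfI, ⊤) W) := by
  have hAp : Ap unitInterval.symm exProg19 (⊥, ⊤) = (⊥, ⊤) := by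
    rw [Ap_ex19]
    refine Prod.ext ?_ ?_ <;> funext p
    · show (⊥ : unitInterval) ⊔ unitInterval.symm ⊤ = ⊥
      rw [show unitInterval.symm ⊤ = ⊥ from unitInterval.symm_one, sup_idem]
    · show (⊤ : unitInterval) ⊔ unitInterval.symm ⊥ = ⊤
      rw [top_sup_eq]
  have hUlt1 : Ult unitInterval.symm exProg19 (⊥, ⊤) = (halfI, ⊤) := by
    refine Prod.ext ?_ ?_
    · refine le_antisymm ?_ (half_le_inf _ _)
      exact sInf_le ⟨halfI, bot_le, le_top, Tp_halfI.symm⟩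
    · refine le_antisymm le_top ?_
      refine le_sSup_of_le ⟨⊤, bot_le, le_top, rfl⟩ ?_
      rw [Tp_top]
  have hUlt2 : Ult unitInterval.symm exProg19 (halfI, ⊤) = (halfI, ⊤) := by
    refine Prod.ext ?_ ?_
    · refine le_antisymm ?_ (half_le_inf _ _)
      exact sInf_le ⟨halfI, le_rfl, le_top, Tp_halfI.symm⟩
    · refine le_antisymm le_top ?_
      refine le_sSup_of_le ⟨⊤, le_top, le_rfl, rfl⟩ ?_
      rw [Tp_top]
  refine ⟨hAp, fun W _ => ⟨bot_le, le_top⟩, hUlt1, hUlt2, fun W hW => ⟨?_, le_top⟩⟩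
  have h1 := congrArg Prod.fst hW
  rw [← h1]
  exact half_le_inf _ _
end
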